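/- arXiv:1510.08733 — 5 statements merged into one kernel-verified Lean document; each statement's English description precedes it below -/
import Mathlib

section
/- Let p be a prime and F = ZMod p. Define T(f₁,f₂,f₃,f₄) := (1/p²) ∑_{x,y ∈ F} f₁(x) f₂(y) f₃(x+y) f₄(xy). Suppose g₁, g₂, g₄ : F → ℂ satisfy ‖gᵢ‖_∞ ≤ K for some K ≥ 1 and ‖gᵢ‖₂ ≤ 1 (L² with respect to uniform probability measure on F), for i ∈ {1,2,4}. Then |T(g₁,g₂,1,g₄)| ≤ ‖g₄‖_{u₂^×} + 4K³/p, where ‖g‖_{u₂^×} := sup over multiplicative characters χ of F* (extended to F by χ(0) := 1) of |(1/p) ∑_{x∈F} g(x) conj(χ(x))|. -/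
open Finset Complex
open scoped ComplexConjugate

/-!
Drop the terms with `x * y = 0`; they contribute at most `2 K² p`. For the others,
orthogonality of the multiplicative characters gives
`(p - 1) ∑_{xy ≠ 0} g₁ x * g₂ y * g₄ (x * y) = ∑_χ (∑_x g₁ x * χ x) (∑_y g₂ y * χ y) ĝ₄ χ`
with `ĝ₄ = mulFourierCoeff g₄`. Bounding `ĝ₄ χ` by its largest value and applying
Cauchy–Schwarz and then Parseval to the two remaining factors bounds these terms by
`p * max_χ ‖ĝ₄ χ‖`. Extending `χ` by `χ 0 = 1` instead of `0` moves `ĝ₄ χ` by `g₄ 0` only.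
-/

namespace MulChar

variable {M R : Type*} [CommMonoid M] [Finite M] [DecidableEq M] [CommRing R] [IsDomain R]
  [HasEnoughRootsOfUnity R (Monoid.exponent Mˣ)] [Fintype (MulChar M R)]

theorem sum_apply_eq_ite (a : M) :
    ∑ χ : MulChar M R, χ a = if a = 1 then (Nat.card Mˣ : R) else 0 := by
  split_ifs with ha
  · simp [ha, ← Nat.card_eq_fintype_card, card_eq_card_units_of_hasEnoughRootsOfUnity]
  · obtain ⟨χ, hχ⟩ := exists_apply_ne_one_of_hasEnoughRootsOfUnity M R ha
    refine eq_zero_of_mul_eq_self_left hχ ?_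
    simp only [Finset.mul_sum, ← mul_apply]
    exact Fintype.sum_bijective _ (Group.mulLeft_bijective χ) _ _ fun _ ↦ rfl

theorem sum_apply_mul_conj_apply {F : Type*} [Field F] [Fintype F] [DecidableEq F]
    [Fintype (MulChar F ℂ)] (u w : F) :
    ∑ χ : MulChar F ℂ, χ u * conj (χ w) = if u = w ∧ w ≠ 0 then (Fintype.card Fˣ : ℂ) else 0 := by
  simp only [← RCLike.star_def, star_apply', inv_apply', ← map_mul, sum_apply_eq_ite]
  rcases eq_or_ne w 0 with rfl | hw
  · simp
  · simp [hw, mul_inv_eq_one₀ hw]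

end MulChar

section MulFourier

variable {F : Type*} [Field F] [Fintype F] [DecidableEq F]

noncomputable def mulFourierCoeff (g : F → ℂ) (χ : MulChar F ℂ) : ℂ := ∑ x, g x * conj (χ x)

/-- Mathlib's characters vanish at `0`, whereas the paper extends them by `χ 0 = 1`. -/
theorem sum_mul_conj_ite_eq_mulFourierCoeff_add (g : F → ℂ) (χ : MulChar F ℂ) :
    ∑ x, g x * conj (if x = 0 then 1 else χ x) = mulFourierCoeff g χ + g 0 := by
  have hχ (x : F) : (if x = 0 then 1 else χ x) = χ x + if x = 0 then 1 else 0 := by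
    split_ifs with hx <;> simp [hx, χ.map_zero]
  simp [hχ, mul_add, sum_add_distrib, mulFourierCoeff]

variable [Fintype (MulChar F ℂ)]

theorem sum_apply_mul_mulFourierCoeff (g : F → ℂ) (u : F) :
    ∑ χ : MulChar F ℂ, χ u * mulFourierCoeff g χ = if u = 0 then 0 else Fintype.card Fˣ * g u := by
  have h : ∑ χ : MulChar F ℂ, χ u * mulFourierCoeff g χ
      = ∑ x, g x * ∑ χ : MulChar F ℂ, χ u * conj (χ x) := by
    simp only [mulFourierCoeff, mul_sum]
    rw [sum_comm]
    exact sum_congr rfl fun _ _ ↦ sum_congr rfl fun _ _ ↦ mul_left_comm _ _ _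
  rw [h]
  simp only [MulChar.sum_apply_mul_conj_apply]
  split_ifs with hu
  · simp [hu, eq_comm]
  · simp [ite_and, hu, mul_comm]

theorem sum_norm_sum_mul_apply_sq (g : F → ℂ) :
    ∑ χ : MulChar F ℂ, ‖∑ x, g x * χ x‖ ^ 2
      = Fintype.card Fˣ * ∑ x ∈ univ.erase 0, ‖g x‖ ^ 2 := by
  have hconj (χ : MulChar F ℂ) : conj (∑ x, g x * χ x) = mulFourierCoeff (conj ∘ g) χ := by
    simp [mulFourierCoeff, map_sum]
  have key : ∑ χ : MulChar F ℂ, ((‖∑ x, g x * χ x‖ ^ 2 : ℝ) : ℂ)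
      = Fintype.card Fˣ * ∑ x ∈ univ.erase 0, ((‖g x‖ ^ 2 : ℝ) : ℂ) := by
    simp only [ofReal_pow, ← mul_conj', hconj, sum_mul]
    rw [sum_comm]
    simp only [mul_assoc, ← mul_sum, sum_apply_mul_mulFourierCoeff]
    rw [← sum_erase_add _ _ (mem_univ 0), if_pos rfl, mul_zero, add_zero, mul_sum]
    refine sum_congr rfl fun x hx ↦ ?_
    rw [if_neg (ne_of_mem_erase hx), Function.comp_apply, mul_left_comm]
  exact_mod_cast key

theorem sum_mul_mul_mulFourierCoeff (g₁ g₂ g₄ : F → ℂ) :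
    ∑ χ : MulChar F ℂ, (∑ x, g₁ x * χ x) * (∑ y, g₂ y * χ y) * mulFourierCoeff g₄ χ
      = Fintype.card Fˣ * ∑ x, ∑ y, if x * y = 0 then 0 else g₁ x * g₂ y * g₄ (x * y) := by
  have h : ∑ χ : MulChar F ℂ, (∑ x, g₁ x * χ x) * (∑ y, g₂ y * χ y) * mulFourierCoeff g₄ χ
      = ∑ x, ∑ y, g₁ x * g₂ y * ∑ χ : MulChar F ℂ, χ (x * y) * mulFourierCoeff g₄ χ := by
    calc _ = ∑ χ : MulChar F ℂ, ∑ x, ∑ y, g₁ x * g₂ y * (χ (x * y) * mulFourierCoeff g₄ χ) := by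
          refine sum_congr rfl fun χ _ ↦ ?_
          rw [sum_mul_sum, sum_mul]
          refine sum_congr rfl fun x _ ↦ ?_
          rw [sum_mul]
          exact sum_congr rfl fun y _ ↦ by rw [map_mul]; ring
      _ = _ := by
          rw [sum_comm]
          refine sum_congr rfl fun x _ ↦ ?_
          rw [sum_comm]
          simp only [mul_sum]
  rw [h]
  simp only [sum_apply_mul_mulFourierCoeff, mul_sum]
  refine sum_congr rfl fun x _ ↦ sum_congr rfl fun y _ ↦ ?_
  split_ifs <;> ring

theorem norm_sum_sum_ite_mul_ne_zero_le (g₁ g₂ g₄ : F → ℂ) {M : ℝ}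
    (hM : ∀ χ, ‖mulFourierCoeff g₄ χ‖ ≤ M) :
    ‖∑ x, ∑ y, if x * y = 0 then 0 else g₁ x * g₂ y * g₄ (x * y)‖
      ≤ M * √(∑ x, ‖g₁ x‖ ^ 2) * √(∑ y, ‖g₂ y‖ ^ 2) := by
  have hq : 0 < (Fintype.card Fˣ : ℝ) := by positivity
  have parseval_le (g : F → ℂ) : √(∑ χ : MulChar F ℂ, ‖∑ x, g x * χ x‖ ^ 2)
      ≤ √(Fintype.card Fˣ : ℝ) * √(∑ x, ‖g x‖ ^ 2) := by
    rw [← Real.sqrt_mul hq.le, sum_norm_sum_mul_apply_sq]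
    gcongr
    exact erase_subset _ _
  have hM0 : 0 ≤ M := (norm_nonneg _).trans (hM 1)
  refine le_of_mul_le_mul_left ?_ hq
  calc (Fintype.card Fˣ : ℝ) * ‖∑ x, ∑ y, if x * y = 0 then 0 else g₁ x * g₂ y * g₄ (x * y)‖
      = ‖∑ χ : MulChar F ℂ, (∑ x, g₁ x * χ x) * (∑ y, g₂ y * χ y) * mulFourierCoeff g₄ χ‖ := by
        rw [sum_mul_mul_mulFourierCoeff, norm_mul, Complex.norm_natCast]
    _ ≤ ∑ χ : MulChar F ℂ, M * (‖∑ x, g₁ x * χ x‖ * ‖∑ y, g₂ y * χ y‖) := by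
        refine norm_sum_le_of_le _ fun χ _ ↦ ?_
        rw [norm_mul, norm_mul, mul_comm]
        gcongr
        exact hM χ
    _ ≤ M * (√(∑ χ : MulChar F ℂ, ‖∑ x, g₁ x * χ x‖ ^ 2)
          * √(∑ χ : MulChar F ℂ, ‖∑ y, g₂ y * χ y‖ ^ 2)) := by
        rw [← mul_sum]
        gcongr
        exact Real.sum_mul_le_sqrt_mul_sqrt _ _ _
    _ ≤ M * ((√(Fintype.card Fˣ : ℝ) * √(∑ x, ‖g₁ x‖ ^ 2))
          * (√(Fintype.card Fˣ : ℝ) * √(∑ y, ‖g₂ y‖ ^ 2))) := by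
        gcongr <;> apply parseval_le
    _ = (Fintype.card Fˣ : ℝ) * (M * √(∑ x, ‖g₁ x‖ ^ 2) * √(∑ y, ‖g₂ y‖ ^ 2)) := by
        rw [mul_mul_mul_comm, Real.mul_self_sqrt hq.le]
        ring

end MulFourier

theorem norm_sum_sum_ite_mul_eq_zero_le {R : Type*} [MulZeroClass R] [NoZeroDivisors R]
    [Fintype R] [DecidableEq R] (g₁ g₂ g₄ : R → ℂ) :
    ‖∑ x, ∑ y, if x * y = 0 then g₁ x * g₂ y * g₄ (x * y) else 0‖
      ≤ (‖g₁ 0‖ * ∑ y, ‖g₂ y‖ + (∑ x, ‖g₁ x‖) * ‖g₂ 0‖) * ‖g₄ 0‖ := by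
  calc _ ≤ ∑ x, ∑ y, ((if x = 0 then ‖g₁ x‖ * ‖g₂ y‖ * ‖g₄ 0‖ else 0)
          + if y = 0 then ‖g₁ x‖ * ‖g₂ y‖ * ‖g₄ 0‖ else 0) := by
        refine norm_sum_le_of_le _ fun x _ ↦ norm_sum_le_of_le _ fun y _ ↦ ?_
        rcases eq_or_ne x 0 with rfl | hx <;> rcases eq_or_ne y 0 with rfl | hy
        · simp only [mul_zero, ite_true, norm_mul, le_add_iff_nonneg_right]
          positivity
        all_goals simp [*]
    _ = _ := by
        simp only [sum_add_distrib, sum_ite_irrel, sum_const_zero, sum_ite_eq', mem_univ, ↓reduceIte]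
        rw [add_mul, mul_sum, sum_mul, sum_mul, sum_mul]

theorem norm_sum_sum_mul_le {F : Type*} [Field F] [Fintype F] [DecidableEq F]
    [Fintype (MulChar F ℂ)] (g₁ g₂ g₄ : F → ℂ) {M : ℝ} (hM : ∀ χ, ‖mulFourierCoeff g₄ χ‖ ≤ M) :
    ‖∑ x, ∑ y, g₁ x * g₂ y * g₄ (x * y)‖
      ≤ M * √(∑ x, ‖g₁ x‖ ^ 2) * √(∑ y, ‖g₂ y‖ ^ 2)
        + (‖g₁ 0‖ * ∑ y, ‖g₂ y‖ + (∑ x, ‖g₁ x‖) * ‖g₂ 0‖) * ‖g₄ 0‖ := by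
  have hsplit : ∑ x, ∑ y, g₁ x * g₂ y * g₄ (x * y)
      = (∑ x, ∑ y, if x * y = 0 then 0 else g₁ x * g₂ y * g₄ (x * y))
        + ∑ x, ∑ y, if x * y = 0 then g₁ x * g₂ y * g₄ (x * y) else 0 := by
    simp only [← sum_add_distrib]
    exact sum_congr rfl fun x _ ↦ sum_congr rfl fun y _ ↦ by split_ifs <;> simp
  rw [hsplit]
  exact (norm_add_le _ _).trans (add_le_add (norm_sum_sum_ite_mul_ne_zero_le g₁ g₂ g₄ hM)
    (norm_sum_sum_ite_mul_eq_zero_le g₁ g₂ g₄))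

theorem sum_norm_le_of_sum_norm_sq_le {ι : Type*} [Fintype ι] (g : ι → ℂ)
    (h : ∑ i, ‖g i‖ ^ 2 ≤ Fintype.card ι) : ∑ i, ‖g i‖ ≤ Fintype.card ι := by
  have hcs := sq_sum_le_card_mul_sum_sq (s := univ) (f := fun i ↦ ‖g i‖)
  rw [card_univ] at hcs
  nlinarith [sum_nonneg fun i (_ : i ∈ univ) ↦ norm_nonneg (g i)]

theorem stmt1_general (p : ℕ) [Fact p.Prime] (K : ℝ) (hK : 1 ≤ K) (g₁ g₂ g₄ : ZMod p → ℂ)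
    (hb₁ : ∀ x, ‖g₁ x‖ ≤ K) (hb₂ : ∀ x, ‖g₂ x‖ ≤ K) (hb₄ : ∀ x, ‖g₄ x‖ ≤ K)
    (h₁₂ : (1 / (p : ℝ)) * ∑ x : ZMod p, ‖g₁ x‖ ^ 2 ≤ 1)
    (h₂₂ : (1 / (p : ℝ)) * ∑ x : ZMod p, ‖g₂ x‖ ^ 2 ≤ 1) :
    ∃ χ : MulChar (ZMod p) ℂ,
      ‖(1 / (p : ℂ) ^ 2) * ∑ x : ZMod p, ∑ y : ZMod p, g₁ x * g₂ y * 1 * g₄ (x * y)‖ ≤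
        ‖(1 / (p : ℂ)) * ∑ x : ZMod p,
            g₄ x * starRingEnd ℂ (if x = 0 then 1 else χ x)‖ + 4 * K ^ 3 / p := by
  have hp : (0 : ℝ) < p := by exact_mod_cast (Fact.out : p.Prime).pos
  have hl2 {g : ZMod p → ℂ} (h : (1 / (p : ℝ)) * ∑ x, ‖g x‖ ^ 2 ≤ 1) : ∑ x, ‖g x‖ ^ 2 ≤ p := by
    rwa [one_div_mul_eq_div, div_le_one hp] at h
  have hl1 {g : ZMod p → ℂ} (h : (1 / (p : ℝ)) * ∑ x, ‖g x‖ ^ 2 ≤ 1) : ∑ x, ‖g x‖ ≤ p := by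
    simpa using sum_norm_le_of_sum_norm_sq_le g (by simpa using hl2 h)
  obtain ⟨χ, hχ⟩ := Finite.exists_max fun χ : MulChar (ZMod p) ℂ ↦ ‖mulFourierCoeff g₄ χ‖
  refine ⟨χ, ?_⟩
  set D := ‖∑ x, g₄ x * starRingEnd ℂ (if x = 0 then 1 else χ x)‖
  have hcoeff : ‖mulFourierCoeff g₄ χ‖ ≤ D + K := (norm_le_add_norm_add _ (g₄ 0)).trans <| by
    rw [← sum_mul_conj_ite_eq_mulFourierCoeff_add]
    gcongr
    exact hb₄ 0
  have hS : ‖∑ x, ∑ y, g₁ x * g₂ y * g₄ (x * y)‖ ≤ (D + K) * p + 2 * K ^ 2 * p := by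
    refine (norm_sum_sum_mul_le g₁ g₂ g₄ hχ).trans ?_
    calc _ ≤ (D + K) * √p * √p + (K * p + p * K) * K := by
          gcongr
          exacts [hl2 h₁₂, hl2 h₂₂, hb₁ 0, hl1 h₂₂, hl1 h₁₂, hb₂ 0, hb₄ 0]
      _ = (D + K) * p + 2 * K ^ 2 * p := by rw [mul_assoc, Real.mul_self_sqrt hp.le]; ring
  calc ‖1 / (p : ℂ) ^ 2 * ∑ x, ∑ y, g₁ x * g₂ y * 1 * g₄ (x * y)‖
      = ‖∑ x, ∑ y, g₁ x * g₂ y * g₄ (x * y)‖ / p ^ 2 := by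
        simp only [mul_one, norm_div, norm_pow, Complex.norm_natCast, one_div_mul_eq_div]
    _ ≤ ((D + K) * p + 2 * K ^ 2 * p) / p ^ 2 := by gcongr
    _ = (D + (K + 2 * K ^ 2)) / p := by field_simp; ring
    _ ≤ (D + 4 * K ^ 3) / p := by gcongr; nlinarith
    _ = ‖1 / (p : ℂ) * ∑ x, g₄ x * starRingEnd ℂ (if x = 0 then 1 else χ x)‖ + 4 * K ^ 3 / p := by
        rw [norm_mul, norm_div, norm_one, Complex.norm_natCast, add_div, one_div_mul_eq_div]

theorem stmt1 (p : ℕ) [Fact p.Prime] (K : ℝ) (hK : 1 ≤ K) (g₁ g₂ g₄ : ZMod p → ℂ)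
    (hb₁ : ∀ x, ‖g₁ x‖ ≤ K) (hb₂ : ∀ x, ‖g₂ x‖ ≤ K) (hb₄ : ∀ x, ‖g₄ x‖ ≤ K)
    (h₁₂ : (1 / (p : ℝ)) * ∑ x : ZMod p, ‖g₁ x‖ ^ 2 ≤ 1)
    (h₂₂ : (1 / (p : ℝ)) * ∑ x : ZMod p, ‖g₂ x‖ ^ 2 ≤ 1)
    (h₄₂ : (1 / (p : ℝ)) * ∑ x : ZMod p, ‖g₄ x‖ ^ 2 ≤ 1) :
    ∃ χ : MulChar (ZMod p) ℂ,
      ‖(1 / (p : ℂ) ^ 2) * ∑ x : ZMod p, ∑ y : ZMod p, g₁ x * g₂ y * 1 * g₄ (x * y)‖ ≤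
        ‖(1 / (p : ℂ)) * ∑ x : ZMod p,
            g₄ x * starRingEnd ℂ (if x = 0 then 1 else χ x)‖ + 4 * K ^ 3 / p :=
  stmt1_general p K hK g₁ g₂ g₄ hb₁ hb₂ hb₄ h₁₂ h₂₂
end

section
/- Let p be a prime, F = ZMod p, and let Q(F) be the set of quadratic phase functions φ(x) = e_p(r x² + s x), r,s ∈ F. Suppose f : F → ℂ has ‖f‖₂ ≤ 1 (uniform probability measure) and ε ≥ 4 p^{-1/8}. Then there exist complex numbers λ_φ (φ ∈ Q(F)) such that: (a) ‖f − ∑_φ λ_φ φ‖_{u₃⁺} ≤ ε; (b) ‖∑_φ λ_φ φ‖₂² ≤ 3; (c) ∑_φ |λ_φ| ≤ 4/ε. -/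
/-!
Put `c_φ = ⟨f, φ⟩` and keep only the large coefficients: `λ_φ = c_φ` if `|c_φ| ≥ ε/2`, else `0`.
By the Gauss sum estimate the normalized quadratic phases are `p^{-1/2}`-almost orthonormal, so
`g = ∑ λ_φ φ` has `‖g‖² ≤ ∑ |λ_φ|² + p^{-1/2} (∑ |λ_φ|)²`, while `∑ |λ_φ|² = ⟨f, g⟩ ≤ ‖g‖` and
`(ε/2) ∑ |λ_φ| ≤ ∑ |λ_φ|²`. Since `p^{-1/2} ≤ ε²/16`, these give `∑ |λ_φ|² ≤ 4/3`, hence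
`∑ |λ_φ| ≤ 8/(3ε)`, and `⟨f - g, ψ⟩ = (c_ψ - λ_ψ) - (⟨g, ψ⟩ - λ_ψ)` has modulus at most
`ε/2 + p^{-1/2} ∑ |λ_φ| ≤ ε`. For `p = 2` the hypothesis forces `ε ≥ 1`, and `λ = 0` works.
-/

open Finset Complex

/-- The additive character `e_p(t) = exp(2πi t / p)`. -/
noncomputable def ep (p : ℕ) (t : ZMod p) : ℂ :=
  Complex.exp (2 * Real.pi * Complex.I * (t.val : ℂ) / (p : ℂ))

open scoped InnerProductSpace ComplexConjugate

section AlmostOrthonormal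

variable {E ι : Type*} [NormedAddCommGroup E] [InnerProductSpace ℂ E]

def IsAlmostOrthonormal (η : ℝ) (φ : ι → E) : Prop :=
  (∀ i, ‖φ i‖ = 1) ∧ Pairwise fun i j => ‖⟪φ i, φ j⟫_ℂ‖ ≤ η

section TruncatedCoeff

variable (φ : ι → E) (f : E) (δ : ℝ)

noncomputable def truncatedCoeff (i : ι) : ℂ :=
  if δ ≤ ‖⟪φ i, f⟫_ℂ‖ then ⟪φ i, f⟫_ℂ else 0

variable {φ f δ}

lemma norm_inner_sub_truncatedCoeff_le (hδ : 0 ≤ δ) (i : ι) :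
    ‖⟪φ i, f⟫_ℂ - truncatedCoeff φ f δ i‖ ≤ δ := by
  by_cases hi : δ ≤ ‖⟪φ i, f⟫_ℂ‖
  · simpa [truncatedCoeff, hi] using hδ
  · simpa [truncatedCoeff, hi] using (not_le.mp hi).le

variable (φ f δ)

lemma mul_norm_truncatedCoeff_le (i : ι) :
    δ * ‖truncatedCoeff φ f δ i‖ ≤ ‖truncatedCoeff φ f δ i‖ ^ 2 := by
  by_cases hi : δ ≤ ‖⟪φ i, f⟫_ℂ‖
  · rw [truncatedCoeff, if_pos hi, sq]
    exact mul_le_mul_of_nonneg_right hi (norm_nonneg _)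
  · simp [truncatedCoeff, hi]

lemma inner_sum_truncatedCoeff_smul [Fintype ι] :
    ⟪∑ i, truncatedCoeff φ f δ i • φ i, f⟫_ℂ = ((∑ i, ‖truncatedCoeff φ f δ i‖ ^ 2 : ℝ) : ℂ) := by
  simp only [sum_inner, inner_smul_left, ofReal_sum, ofReal_pow]
  refine sum_congr rfl fun i _ => ?_
  by_cases hi : δ ≤ ‖⟪φ i, f⟫_ℂ‖
  · rw [truncatedCoeff, if_pos hi, conj_mul']
  · simp [truncatedCoeff, hi]

end TruncatedCoeff

namespace IsAlmostOrthonormal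

variable [Fintype ι] {η : ℝ} {φ : ι → E}

lemma norm_inner_sum_smul_sub_le (h : IsAlmostOrthonormal η φ) (hη : 0 ≤ η) (a : ι → ℂ)
    (i : ι) : ‖⟪φ i, ∑ j, a j • φ j⟫_ℂ - a i‖ ≤ η * ∑ j, ‖a j‖ := by
  classical
  have hii : ⟪φ i, φ i⟫_ℂ = 1 := by simp [inner_self_eq_norm_sq_to_K, h.1 i]
  rw [inner_sum, ← Finset.add_sum_erase _ _ (mem_univ i), inner_smul_right, hii, mul_one,
    add_sub_cancel_left, mul_sum]
  calc ‖∑ j ∈ univ.erase i, ⟪φ i, a j • φ j⟫_ℂ‖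
      ≤ ∑ j ∈ univ.erase i, η * ‖a j‖ := by
        refine norm_sum_le_of_le _ fun j hj => ?_
        rw [inner_smul_right, norm_mul, mul_comm]
        exact mul_le_mul_of_nonneg_right (h.2 (ne_of_mem_erase hj).symm) (norm_nonneg _)
    _ ≤ ∑ j, η * ‖a j‖ :=
        sum_le_sum_of_subset_of_nonneg (erase_subset _ _) fun _ _ _ => by positivity

lemma norm_sum_smul_sq_le (h : IsAlmostOrthonormal η φ) (hη : 0 ≤ η) (a : ι → ℂ) :
    ‖∑ i, a i • φ i‖ ^ 2 ≤ ∑ i, ‖a i‖ ^ 2 + η * (∑ i, ‖a i‖) ^ 2 := by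
  set g := ∑ i, a i • φ i
  have hg : ⟪g, g⟫_ℂ = ∑ i, conj (a i) * ⟪φ i, g⟫_ℂ := by
    simp only [g, sum_inner, inner_smul_left]
  calc ‖g‖ ^ 2 = RCLike.re ⟪g, g⟫_ℂ := (inner_self_eq_norm_sq g).symm
    _ ≤ ‖∑ i, conj (a i) * ⟪φ i, g⟫_ℂ‖ := hg ▸ RCLike.re_le_norm _
    _ ≤ ∑ i, ‖a i‖ * (‖a i‖ + η * ∑ j, ‖a j‖) := by
        refine norm_sum_le_of_le _ fun i _ => ?_
        rw [norm_mul, RCLike.norm_conj]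
        gcongr
        calc ‖⟪φ i, g⟫_ℂ‖ ≤ ‖a i‖ + ‖⟪φ i, g⟫_ℂ - a i‖ := norm_le_insert' _ _
          _ ≤ _ := by grw [h.norm_inner_sum_smul_sub_le hη a i]
    _ = ∑ i, ‖a i‖ ^ 2 + η * (∑ i, ‖a i‖) ^ 2 := by
        simp only [mul_add, sum_add_distrib, ← sum_mul, ← sq]; ring

theorem exists_sparse_approximation (h : IsAlmostOrthonormal η φ) (hη : 0 ≤ η) {ε : ℝ}
    (hε : 0 < ε) (hηε : η ≤ ε ^ 2 / 16) {f : E} (hf : ‖f‖ ≤ 1) :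
    ∃ a : ι → ℂ, (∀ j, ‖⟪φ j, f - ∑ i, a i • φ i⟫_ℂ‖ ≤ ε) ∧
      ‖∑ i, a i • φ i‖ ^ 2 ≤ 3 ∧ ∑ i, ‖a i‖ ≤ 4 / ε := by
  set a := truncatedCoeff φ f (ε / 2)
  set g := ∑ i, a i • φ i
  set T := ∑ i, ‖a i‖
  set S := ∑ i, ‖a i‖ ^ 2
  have hS0 : 0 ≤ S := by positivity
  have hSg : S ≤ ‖g‖ := by
    calc S = ‖⟪g, f⟫_ℂ‖ := by
          rw [inner_sum_truncatedCoeff_smul, norm_real, Real.norm_of_nonneg hS0]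
      _ ≤ ‖g‖ * ‖f‖ := norm_inner_le_norm _ _
      _ ≤ ‖g‖ := mul_le_of_le_one_right (norm_nonneg _) hf
  have hg : ‖g‖ ^ 2 ≤ S + η * T ^ 2 := h.norm_sum_smul_sq_le hη a
  have hTS : ε / 2 * T ≤ S := by
    rw [mul_sum]
    exact sum_le_sum fun i _ => mul_norm_truncatedCoeff_le φ f _ i
  have hηT : η * T ^ 2 ≤ S ^ 2 / 4 := by
    calc η * T ^ 2 ≤ ε ^ 2 / 16 * T ^ 2 := by gcongr
      _ = (ε * T) ^ 2 / 16 := by ring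
      _ ≤ (2 * S) ^ 2 / 16 := by gcongr ?_ ^ 2 / 16; linarith
      _ = S ^ 2 / 4 := by ring
  have hS : S ≤ 4 / 3 := by nlinarith [pow_le_pow_left₀ hS0 hSg 2]
  have hηT' : η * T ≤ ε / 2 := by
    refine le_of_mul_le_mul_left ?_ hε
    calc ε * (η * T) = η * (ε * T) := by ring
      _ ≤ ε ^ 2 / 16 * (8 / 3) := by gcongr; linarith
      _ ≤ ε * (ε / 2) := by nlinarith
  refine ⟨a, fun j => ?_, show ‖g‖ ^ 2 ≤ 3 by nlinarith, ?_⟩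
  · calc ‖⟪φ j, f - g⟫_ℂ‖ = ‖(⟪φ j, f⟫_ℂ - a j) - (⟪φ j, g⟫_ℂ - a j)‖ := by
          rw [inner_sub_right, sub_sub_sub_cancel_right]
      _ ≤ ε / 2 + η * T := norm_sub_le_of_le (norm_inner_sub_truncatedCoeff_le (by positivity) j)
          (h.norm_inner_sum_smul_sub_le hη a j)
      _ ≤ ε := by linarith
  · rw [le_div_iff₀ hε]
    linarith

end IsAlmostOrthonormal

end AlmostOrthonormal

section NormalizedL2

variable {α : Type*} [Fintype α]

noncomputable def normalizedL2 : (α → ℂ) →ₗ[ℂ] EuclideanSpace ℂ α :=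
  ((√(Fintype.card α : ℝ) : ℂ))⁻¹ • (WithLp.linearEquiv 2 ℂ (α → ℂ)).symm.toLinearMap

lemma normalizedL2_apply (h : α → ℂ) (x : α) :
    normalizedL2 h x = ((√(Fintype.card α : ℝ) : ℂ))⁻¹ * h x := rfl

lemma inner_normalizedL2 (g h : α → ℂ) :
    ⟪normalizedL2 g, normalizedL2 h⟫_ℂ = 1 / (Fintype.card α : ℂ) * ∑ x, conj (g x) * h x := by
  have hsq : ((√(Fintype.card α : ℝ) : ℂ))⁻¹ * ((√(Fintype.card α : ℝ) : ℂ))⁻¹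
      = 1 / (Fintype.card α : ℂ) := by
    rw [← mul_inv, ← ofReal_mul, Real.mul_self_sqrt (by positivity)]
    simp
  simp only [PiLp.inner_apply, normalizedL2_apply, RCLike.inner_apply, map_mul, map_inv₀,
    conj_ofReal, mul_sum]
  exact sum_congr rfl fun x _ => by linear_combination h x * conj (g x) * hsq

lemma norm_normalizedL2_sq (h : α → ℂ) :
    ‖normalizedL2 h‖ ^ 2 = 1 / (Fintype.card α : ℝ) * ∑ x, ‖h x‖ ^ 2 := by
  have := congrArg re (inner_normalizedL2 h h)
  rw [inner_self_eq_norm_sq_to_K] at this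
  simpa [conj_mul', ← ofReal_pow] using this

end NormalizedL2

section QuadraticPhase

variable {F : Type*} [Field F] [Fintype F] {ψ : AddChar F ℂ}

lemma norm_sum_addChar_quadratic_sq (hψ : ψ.IsPrimitive) (h2 : (2 : F) ≠ 0) {a : F}
    (ha : a ≠ 0) (b : F) : ‖∑ x, ψ (a * x ^ 2 + b * x)‖ ^ 2 = Fintype.card F := by
  classical
  set Q : F → F := fun x => a * x ^ 2 + b * x
  have hQ : ∀ y h, Q (y + h) - Q y = Q h + y * (2 * a * h) := fun y h => by simp only [Q]; ring
  have key : ((‖∑ x, ψ (Q x)‖ ^ 2 : ℝ) : ℂ) = Fintype.card F := by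
    calc ((‖∑ x, ψ (Q x)‖ ^ 2 : ℝ) : ℂ) = ∑ y, ∑ x, ψ (Q x) * conj (ψ (Q y)) := by
          rw [ofReal_pow, ← mul_conj', map_sum, sum_mul_sum, sum_comm]
      _ = ∑ y, ∑ h, ψ (Q h) * ψ (y * (2 * a * h)) := by
          refine sum_congr rfl fun y _ => ?_
          rw [← Equiv.sum_comp (Equiv.addLeft y)]
          simp only [Equiv.coe_addLeft, ← AddChar.map_neg_eq_conj, ← AddChar.map_add_eq_mul,
            ← sub_eq_add_neg, hQ]
      _ = ∑ h, ψ (Q h) * ∑ y, ψ (y * (2 * a * h)) := by rw [sum_comm]; simp_rw [mul_sum]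
      _ = Fintype.card F := by
          simp_rw [AddChar.sum_mulShift _ hψ, mul_eq_zero, h2, ha, false_or]
          simp [Q]
  exact_mod_cast key

lemma norm_sum_addChar_quadratic_le (hψ : ψ.IsPrimitive) (h2 : (2 : F) ≠ 0) {a b : F}
    (hab : (a, b) ≠ 0) : ‖∑ x, ψ (a * x ^ 2 + b * x)‖ ≤ √(Fintype.card F) := by
  classical
  rcases eq_or_ne a 0 with rfl | ha
  · have hb : b ≠ 0 := by rintro rfl; exact hab rfl
    simp [mul_comm b, AddChar.sum_mulShift _ hψ, hb]
  · rw [← norm_sum_addChar_quadratic_sq hψ h2 ha b, Real.sqrt_sq (norm_nonneg _)]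

def quadraticPhase (ψ : AddChar F ℂ) (rs : F × F) (x : F) : ℂ :=
  ψ (rs.1 * x ^ 2 + rs.2 * x)

lemma inner_normalizedL2_quadraticPhase (rs : F × F) (g : F → ℂ) :
    ⟪normalizedL2 (quadraticPhase ψ rs), normalizedL2 g⟫_ℂ =
      1 / (Fintype.card F : ℂ) * ∑ x, g x * ψ (-(rs.1 * x ^ 2 + rs.2 * x)) := by
  simp only [inner_normalizedL2, quadraticPhase, AddChar.map_neg_eq_conj, mul_comm]

lemma norm_normalizedL2_quadraticPhase (rs : F × F) :
    ‖normalizedL2 (quadraticPhase ψ rs)‖ = 1 := by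
  have hF : (Fintype.card F : ℝ) ≠ 0 := by positivity
  rw [← pow_eq_one_iff_of_nonneg (norm_nonneg _) two_ne_zero, norm_normalizedL2_sq]
  simp [quadraticPhase, AddChar.norm_apply, hF]

lemma isAlmostOrthonormal_quadraticPhase (hψ : ψ.IsPrimitive) (h2 : (2 : F) ≠ 0) :
    IsAlmostOrthonormal (√(Fintype.card F))⁻¹ fun rs => normalizedL2 (quadraticPhase ψ rs) := by
  refine ⟨norm_normalizedL2_quadraticPhase, fun rs rs' hne => ?_⟩
  have hdiff : ((rs'.1 - rs.1, rs'.2 - rs.2) : F × F) ≠ 0 := by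
    intro h
    exact hne (Prod.ext (sub_eq_zero.mp (congrArg Prod.fst h)).symm
      (sub_eq_zero.mp (congrArg Prod.snd h)).symm)
  have hF : (0 : ℝ) < Fintype.card F := by positivity
  change ‖⟪normalizedL2 (quadraticPhase ψ rs), normalizedL2 (quadraticPhase ψ rs')⟫_ℂ‖ ≤ _
  rw [inner_normalizedL2_quadraticPhase, norm_mul]
  calc ‖1 / (Fintype.card F : ℂ)‖ * ‖∑ x, quadraticPhase ψ rs' x * ψ (-(rs.1 * x ^ 2 + rs.2 * x))‖
      = 1 / Fintype.card F * ‖∑ x, ψ ((rs'.1 - rs.1) * x ^ 2 + (rs'.2 - rs.2) * x)‖ := by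
        simp only [quadraticPhase, ← AddChar.map_add_eq_mul]
        congr 2
        · simp
        · exact sum_congr rfl fun x _ => by ring_nf
    _ ≤ 1 / Fintype.card F * √(Fintype.card F) := by
        gcongr; exact norm_sum_addChar_quadratic_le hψ h2 hdiff
    _ = (√(Fintype.card F))⁻¹ := by
        field_simp; exact Real.sq_sqrt hF.le

end QuadraticPhase

lemma ep_eq_stdAddChar (p : ℕ) [NeZero p] : ep p = ZMod.stdAddChar := by
  ext t
  rw [ep, ZMod.stdAddChar_apply, ZMod.toCircle_apply]

lemma inv_sqrt_le_sq_div_of_four_rpow_le {x ε : ℝ} (hx : 1 ≤ x) (hε : 4 * x ^ (-(1 : ℝ) / 8) ≤ ε) :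
    (√x)⁻¹ ≤ ε ^ 2 / 16 := by
  set y := x ^ (-(1 : ℝ) / 8)
  have hy0 : 0 ≤ y := by positivity
  have hy1 : y ≤ 1 := Real.rpow_le_one_of_one_le_of_nonpos hx (by norm_num)
  have hsqrt : (√x)⁻¹ = y ^ 4 := by
    rw [Real.sqrt_eq_rpow, ← Real.rpow_neg (by positivity), ← Real.rpow_natCast,
      ← Real.rpow_mul (by positivity)]
    norm_num
  calc (√x)⁻¹ = y ^ 4 := hsqrt
    _ ≤ y ^ 2 := pow_le_pow_of_le_one hy0 hy1 (by norm_num)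
    _ ≤ (ε / 4) ^ 2 := by gcongr; linarith
    _ = ε ^ 2 / 16 := by ring

theorem stmt4 (p : ℕ) [Fact p.Prime] (f : ZMod p → ℂ)
    (hf : (1 / (p : ℝ)) * ∑ x : ZMod p, ‖f x‖ ^ 2 ≤ 1)
    (ε : ℝ) (hε : 4 * (p : ℝ) ^ (-(1 : ℝ) / 8) ≤ ε) :
    ∃ lam : ZMod p × ZMod p → ℂ,
      (∀ a b : ZMod p,
        ‖(1 / (p : ℂ)) * ∑ x : ZMod p,
            (f x - ∑ rs : ZMod p × ZMod p, lam rs * ep p (rs.1 * x ^ 2 + rs.2 * x)) *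
              ep p (-(a * x ^ 2 + b * x))‖ ≤ ε) ∧
      (1 / (p : ℝ)) * ∑ x : ZMod p,
          ‖∑ rs : ZMod p × ZMod p, lam rs * ep p (rs.1 * x ^ 2 + rs.2 * x)‖ ^ 2 ≤ 3 ∧
      ∑ rs : ZMod p × ZMod p, ‖lam rs‖ ≤ 4 / ε := by
  set φ := fun rs => normalizedL2 (quadraticPhase (ZMod.stdAddChar (N := p)) rs)
  have hp : (1 : ℝ) ≤ p := by exact_mod_cast (Fact.out : p.Prime).one_lt.le
  have hε0 : 0 < ε := lt_of_lt_of_le (by positivity) hε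
  have hf' : ‖normalizedL2 f‖ ≤ 1 := by
    rw [← sq_le_one_iff₀ (norm_nonneg _), norm_normalizedL2_sq, ZMod.card]
    exact hf
  obtain ⟨lam, hres, hnorm, hsum⟩ : ∃ lam : ZMod p × ZMod p → ℂ,
      (∀ j, ‖⟪φ j, normalizedL2 f - ∑ i, lam i • φ i⟫_ℂ‖ ≤ ε) ∧
        ‖∑ i, lam i • φ i‖ ^ 2 ≤ 3 ∧ ∑ i, ‖lam i‖ ≤ 4 / ε := by
    rcases eq_or_ne p 2 with rfl | hp2
    · have h2 : (2 : ℝ) ^ (-2 : ℝ) ≤ 2 ^ (-(1 : ℝ) / 8) :=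
        Real.rpow_le_rpow_of_exponent_le (by norm_num) (by norm_num)
      have hε1 : 1 ≤ ε := by norm_num [Real.rpow_neg] at h2 hε ⊢; linarith
      refine ⟨0, fun j => ?_, by simp, by simp; positivity⟩
      simp only [Pi.zero_apply, zero_smul, sum_const_zero, sub_zero]
      calc ‖⟪φ j, normalizedL2 f⟫_ℂ‖ ≤ ‖φ j‖ * ‖normalizedL2 f‖ := norm_inner_le_norm _ _
        _ ≤ ε := by rw [norm_normalizedL2_quadraticPhase, one_mul]; exact hf'.trans hε1
    · exact (isAlmostOrthonormal_quadraticPhase (ZMod.isPrimitive_stdAddChar p)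
        (Ring.two_ne_zero (by rwa [ZMod.ringChar_zmod_n]))).exists_sparse_approximation
        (by positivity) hε0 (by rw [ZMod.card]; exact inv_sqrt_le_sq_div_of_four_rpow_le hp hε) hf'
  have hlin : ∑ i, lam i • φ i =
      normalizedL2 fun x => ∑ rs, lam rs * ep p (rs.1 * x ^ 2 + rs.2 * x) := by
    ext x
    simp [φ, normalizedL2_apply, quadraticPhase, ep_eq_stdAddChar, mul_sum, mul_left_comm]
  refine ⟨lam, fun a b => ?_, ?_, hsum⟩
  · have := hres (a, b)
    rwa [hlin, ← map_sub, inner_normalizedL2_quadraticPhase, ZMod.card, ← ep_eq_stdAddChar] at this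
  · rwa [hlin, norm_normalizedL2_sq, ZMod.card] at hnorm
end

section
/- Let G be a compact abelian topological group with Haar probability measure μ_G, let d ≥ 1, and let π : G → (ℝ/ℤ)^d be a continuous group homomorphism. For θ ∈ (ℝ/ℤ)^d write |θ| := max_i ‖θ_i‖_{ℝ/ℤ}, where ‖·‖_{ℝ/ℤ} is the distance to the nearest integer. Then for every δ ∈ (0,1], μ_G({x ∈ G : |π(x)| ≤ δ}) ≥ δ^d. -/
/-!
Average over the translates of a box: if `Q` is the closed sup-norm ball of radius `δ / 2` in the
torus `(ℝ/ℤ)^d`, then by Fubini `∫ μ(π⁻¹(t + Q)) dt = ∫ vol(π x - Q) dμ(x) = δ^d`, so some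
translate satisfies `μ(π⁻¹(t + Q)) ≥ δ^d`. Translating that preimage back by one of its points
lands it inside `π⁻¹(Q - Q) = {x : |π x| ≤ δ}`, and `μ` is translation invariant.
-/

open MeasureTheory Metric

lemma exists_le_measure_preimage_closedBall {X Y : Type*} [PseudoMetricSpace X]
    [SecondCountableTopology X] [MeasurableSpace X] [OpensMeasurableSpace X] [MeasurableSpace Y]
    (ν : Measure X) [IsProbabilityMeasure ν] (μ : Measure Y) [IsFiniteMeasure μ]
    {f : Y → X} (hf : Measurable f) {r : ℝ} {c : ENNReal} (hc : ∀ t, c ≤ ν (closedBall t r)) :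
    ∃ t, c * μ Set.univ ≤ μ (f ⁻¹' closedBall t r) := by
  set S : Set (X × Y) := {p | dist (f p.2) p.1 ≤ r}
  have hS : MeasurableSet S :=
    measurableSet_le ((hf.comp measurable_snd).dist measurable_fst) measurable_const
  have hprod : c * μ Set.univ ≤ (ν.prod μ) S := by
    rw [Measure.prod_apply_symm hS, ← lintegral_const]
    exact lintegral_mono fun y =>
      (hc (f y)).trans_eq (congrArg ν (Set.ext fun _ => mem_closedBall_comm))
  have hfinite : ∫⁻ t, μ (Prod.mk t ⁻¹' S) ∂ν ≠ ⊤ := by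
    rw [← Measure.prod_apply hS]
    exact measure_ne_top _ _
  obtain ⟨t, ht⟩ := exists_lintegral_le hfinite
  refine ⟨t, ?_⟩
  calc c * μ Set.univ ≤ (ν.prod μ) S := hprod
    _ = ∫⁻ t, μ (Prod.mk t ⁻¹' S) ∂ν := Measure.prod_apply hS
    _ ≤ μ (f ⁻¹' closedBall t r) := ht

lemma measure_preimage_closedBall_le_preimage_closedBall_zero {G E : Type*} [AddGroup G]
    [MeasurableSpace G] [MeasurableAdd G] (μ : Measure G) [μ.IsAddLeftInvariant]
    [SeminormedAddCommGroup E] (π : G →+ E) (t : E) (r : ℝ) :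
    μ (π ⁻¹' closedBall t r) ≤ μ (π ⁻¹' closedBall 0 (2 * r)) := by
  rcases (π ⁻¹' closedBall t r).eq_empty_or_nonempty with h | ⟨x₀, hx₀⟩
  · simp [h]
  rw [← measure_preimage_add μ (-x₀) (π ⁻¹' closedBall 0 (2 * r))]
  refine measure_mono fun x hx => ?_
  rw [Set.mem_preimage, Set.mem_preimage, mem_closedBall_zero_iff, map_add, map_neg,
    neg_add_eq_sub, ← dist_eq_norm]
  calc dist (π x) (π x₀) ≤ dist (π x) t + dist (π x₀) t := dist_triangle_right _ _ _
    _ ≤ r + r := add_le_add hx hx₀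
    _ = 2 * r := by ring

lemma AddCircle.volume_pi_closedBall {ι : Type*} [Fintype ι] {T : ℝ} [Fact (0 < T)]
    (t : ι → AddCircle T) {r : ℝ} (hr : 0 ≤ r) (hrT : 2 * r ≤ T) :
    volume (closedBall t r) = ENNReal.ofReal ((2 * r) ^ Fintype.card ι) := by
  simp only [MeasureTheory.volume_pi_closedBall t hr, AddCircle.volume_closedBall,
    min_eq_right hrT, Finset.prod_const, Finset.card_univ]
  exact (ENNReal.ofReal_pow (by positivity) _).symm

instance : IsProbabilityMeasure (volume : Measure UnitAddCircle) :=
  ⟨UnitAddCircle.measure_univ⟩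

theorem stmt6_general {G : Type*} [AddCommGroup G] [TopologicalSpace G] [IsTopologicalAddGroup G]
    [MeasurableSpace G] [BorelSpace G]
    (μ : Measure G) [IsProbabilityMeasure μ] [μ.IsAddHaarMeasure]
    (d : ℕ)
    (π : G →+ (Fin d → AddCircle (1 : ℝ))) (hπ : Continuous π)
    (δ : ℝ) (hδ0 : 0 < δ) (hδ1 : δ ≤ 1) :
    ENNReal.ofReal (δ ^ d) ≤ μ {x : G | ∀ i, ‖π x i‖ ≤ δ} := by
  have hr : 0 ≤ δ / 2 := by positivity
  have hball (t : Fin d → AddCircle (1 : ℝ)) :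
      ENNReal.ofReal (δ ^ d) ≤ volume (closedBall t (δ / 2)) := by
    rw [AddCircle.volume_pi_closedBall t hr (by linarith), Fintype.card_fin,
      mul_div_cancel₀ _ two_ne_zero]
  obtain ⟨t, ht⟩ := exists_le_measure_preimage_closedBall volume μ hπ.measurable hball
  have hbox : {x : G | ∀ i, ‖π x i‖ ≤ δ} = π ⁻¹' closedBall 0 (2 * (δ / 2)) := by
    ext x
    rw [mul_div_cancel₀ _ two_ne_zero, Set.mem_preimage, mem_closedBall_zero_iff,
      pi_norm_le_iff_of_nonneg hδ0.le, Set.mem_ofPred_eq]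
  rw [hbox]
  calc ENNReal.ofReal (δ ^ d) = ENNReal.ofReal (δ ^ d) * μ Set.univ := by
        rw [measure_univ, mul_one]
    _ ≤ μ (π ⁻¹' closedBall t (δ / 2)) := ht
    _ ≤ _ := measure_preimage_closedBall_le_preimage_closedBall_zero μ π t _

theorem stmt6 {G : Type*} [AddCommGroup G] [TopologicalSpace G] [IsTopologicalAddGroup G]
    [CompactSpace G] [MeasurableSpace G] [BorelSpace G]
    (μ : Measure G) [IsProbabilityMeasure μ] [μ.IsAddHaarMeasure]
    (d : ℕ) (hd : 1 ≤ d)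
    (π : G →+ (Fin d → AddCircle (1 : ℝ))) (hπ : Continuous π)
    (δ : ℝ) (hδ0 : 0 < δ) (hδ1 : δ ≤ 1) :
    ENNReal.ofReal (δ ^ d) ≤ μ {x : G | ∀ i, ‖π x i‖ ≤ δ} :=
  stmt6_general μ d π hπ δ hδ0 hδ1
end

section
/- Let (X, ν_X) and (Y, ν_Y) be probability spaces, let A ⊆ X × Y be measurable with (ν_X × ν_Y)(A) = α, and let η ∈ (0,1]. Then there is a measurable set X' ⊆ X with ν_X(X') ≥ α/2 such that the set E := {(x₁,x₂) ∈ X×X : ν_Y({y : (x₁,y) ∈ A and (x₂,y) ∈ A}) ≤ η α²/2} satisfies ν_X^{⊗2}(E ∩ (X'×X')) ≤ η · ν_X(X')². -/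
open MeasureTheory
open scoped ENNReal

/-! Pick `y ∈ Y` at random and let `X'` be its neighbourhood `{x | (x, y) ∈ A}`. By Fubini and
Cauchy–Schwarz, `𝔼_y νX(X')² ≥ α²`, while by Fubini `𝔼_y (νX ⊗ νX)(E ∩ X' ×ˢ X')` is the integral
over `E` of the measure of common neighbourhoods, hence at most `ηα²/2`. So
`𝔼_y [η νX(X')² - (νX ⊗ νX)(E ∩ X' ×ˢ X')] ≥ ηα²/2`, and some `y` does at least as well as
the average; that `y` gives both `(νX ⊗ νX)(E ∩ X' ×ˢ X') ≤ η νX(X')²` and `νX(X')² ≥ α²/2`. -/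

lemma ENNReal.sq_lintegral_le_lintegral_sq {α : Type*} [MeasurableSpace α] {μ : Measure α}
    [IsProbabilityMeasure μ] {f : α → ℝ≥0∞} (hf : AEMeasurable f μ) :
    (∫⁻ a, f a ∂μ) ^ 2 ≤ ∫⁻ a, f a ^ 2 ∂μ := by
  have h := ENNReal.lintegral_mul_le_Lp_mul_Lq μ .two_two hf (aemeasurable_const (b := 1))
  simp only [Pi.mul_apply, mul_one, ENNReal.one_rpow, lintegral_const, measure_univ] at h
  rw [one_div, ENNReal.le_rpow_inv_iff two_pos] at h
  simpa [ENNReal.rpow_two] using h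

lemma exists_le_of_lintegral_le {α : Type*} [MeasurableSpace α] {μ : Measure α} [NeZero μ]
    {f g : α → ℝ≥0∞} (hf : AEMeasurable f μ) (hfi : ∫⁻ a, f a ∂μ ≠ ∞)
    (hfg : ∫⁻ a, f a ∂μ ≤ ∫⁻ a, g a ∂μ) : ∃ a, f a ≤ g a := by
  by_contra! hgf
  have hgi : ∫⁻ a, g a ∂μ ≠ ∞ := ne_top_of_le_ne_top hfi (lintegral_mono fun a => (hgf a).le)
  exact (lintegral_strict_mono (NeZero.ne μ) hf hgi (ae_of_all _ hgf)).not_ge hfg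

section CommonNeighbourhood

variable {X Y : Type*} [MeasurableSpace X] [MeasurableSpace Y] {A : Set (X × Y)}

lemma measurableSet_commonNeighbourhood (hA : MeasurableSet A) :
    MeasurableSet {p : (X × X) × Y | (p.1.1, p.2) ∈ A ∧ (p.1.2, p.2) ∈ A} :=
  (hA.preimage (measurable_fst.fst.prodMk measurable_snd)).inter
    (hA.preimage (measurable_fst.snd.prodMk measurable_snd))

lemma measurable_measure_commonNeighbourhood (νY : Measure Y) [SFinite νY]
    (hA : MeasurableSet A) :
    Measurable fun q : X × X => νY {y | (q.1, y) ∈ A ∧ (q.2, y) ∈ A} :=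
  measurable_measure_prodMk_left (measurableSet_commonNeighbourhood hA)

lemma measurable_measure_inter_neighbourhood_prod (νX : Measure X) [SFinite νX]
    (hA : MeasurableSet A) {S : Set (X × X)} (hS : MeasurableSet S) :
    Measurable fun y => (νX.prod νX) (S ∩ {x | (x, y) ∈ A} ×ˢ {x | (x, y) ∈ A}) :=
  measurable_measure_prodMk_right ((measurable_fst hS).inter (measurableSet_commonNeighbourhood hA))

lemma lintegral_measure_inter_neighbourhood_prod (νX : Measure X) (νY : Measure Y) [SFinite νX]
    [SFinite νY] (hA : MeasurableSet A) {S : Set (X × X)} (hS : MeasurableSet S) :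
    ∫⁻ y, (νX.prod νX) (S ∩ {x | (x, y) ∈ A} ×ˢ {x | (x, y) ∈ A}) ∂νY =
      ∫⁻ q in S, νY {y | (q.1, y) ∈ A ∧ (q.2, y) ∈ A} ∂(νX.prod νX) := by
  have hT : MeasurableSet {p : (X × X) × Y | p.1 ∈ S ∧ (p.1.1, p.2) ∈ A ∧ (p.1.2, p.2) ∈ A} :=
    (measurable_fst hS).inter (measurableSet_commonNeighbourhood hA)
  calc _ = ((νX.prod νX).prod νY) {p | p.1 ∈ S ∧ (p.1.1, p.2) ∈ A ∧ (p.1.2, p.2) ∈ A} :=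
        (Measure.prod_apply_symm hT).symm
    _ = _ := by
      rw [Measure.prod_apply hT, ← lintegral_indicator hS]
      congr 1 with q
      by_cases hq : q ∈ S <;> simp [hq]

theorem exists_measure_inter_neighbourhood_prod_add_le (νX : Measure X) (νY : Measure Y)
    [IsProbabilityMeasure νX] [IsProbabilityMeasure νY] (hA : MeasurableSet A) {η c : ℝ≥0∞}
    (hc : c ≠ ∞) (hηc : 2 * c ≤ η * (νX.prod νY) A ^ 2) {S : Set (X × X)} (hS : MeasurableSet S)
    (hSc : ∀ q ∈ S, νY {y | (q.1, y) ∈ A ∧ (q.2, y) ∈ A} ≤ c) :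
    ∃ y, (νX.prod νX) (S ∩ {x | (x, y) ∈ A} ×ˢ {x | (x, y) ∈ A}) + c ≤
      η * νX {x | (x, y) ∈ A} ^ 2 := by
  have hN := measurable_measure_prodMk_right (μ := νX) hA
  have hbad : ∫⁻ y, (νX.prod νX) (S ∩ {x | (x, y) ∈ A} ×ˢ {x | (x, y) ∈ A}) ∂νY ≤ c :=
    calc _ = ∫⁻ q in S, νY {y | (q.1, y) ∈ A ∧ (q.2, y) ∈ A} ∂(νX.prod νX) :=
          lintegral_measure_inter_neighbourhood_prod νX νY hA hS
      _ ≤ ∫⁻ _ in S, c ∂(νX.prod νX) := setLIntegral_mono' hS hSc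
      _ = c * (νX.prod νX) S := setLIntegral_const _ _
      _ ≤ c := mul_le_of_le_one_right' prob_le_one
  have hgood : 2 * c ≤ ∫⁻ y, η * νX {x | (x, y) ∈ A} ^ 2 ∂νY :=
    calc 2 * c ≤ η * (νX.prod νY) A ^ 2 := hηc
      _ = η * (∫⁻ y, νX {x | (x, y) ∈ A} ∂νY) ^ 2 := by rw [Measure.prod_apply_symm hA]; rfl
      _ ≤ η * ∫⁻ y, νX {x | (x, y) ∈ A} ^ 2 ∂νY := by
          gcongr; exact ENNReal.sq_lintegral_le_lintegral_sq hN.aemeasurable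
      _ = _ := (lintegral_const_mul _ (hN.pow_const 2)).symm
  have hsum : ∫⁻ y, (νX.prod νX) (S ∩ {x | (x, y) ∈ A} ×ˢ {x | (x, y) ∈ A}) + c ∂νY ≤ 2 * c := by
    rw [lintegral_add_right _ measurable_const, lintegral_const, measure_univ, mul_one, two_mul]
    gcongr
  exact exists_le_of_lintegral_le
    ((measurable_measure_inter_neighbourhood_prod νX hA hS).add_const c).aemeasurable
    (ne_top_of_le_ne_top (by finiteness) hsum) (hsum.trans hgood)

end CommonNeighbourhood

theorem stmt10_general {X Y : Type*} [MeasurableSpace X] [MeasurableSpace Y]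
    (νX : Measure X) (νY : Measure Y)
    [IsProbabilityMeasure νX] [IsProbabilityMeasure νY]
    (A : Set (X × Y)) (hA : MeasurableSet A)
    (α : ℝ) (hα : ((νX.prod νY) A).toReal = α)
    (η : ℝ) (hη0 : 0 < η) :
    ∃ X' : Set X, MeasurableSet X' ∧ α / 2 ≤ (νX X').toReal ∧
      ((νX.prod νX)
          ({q : X × X | (νY {y | (q.1, y) ∈ A ∧ (q.2, y) ∈ A}).toReal ≤ η * α ^ 2 / 2} ∩
            X' ×ˢ X')).toReal ≤ η * (νX X').toReal ^ 2 := by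
  have hα0 : 0 ≤ α := hα ▸ ENNReal.toReal_nonneg
  have hμA : (νX.prod νY) A = ENNReal.ofReal α := by
    rw [← hα, ENNReal.ofReal_toReal (measure_ne_top _ _)]
  have hηc : 2 * ENNReal.ofReal (η * α ^ 2 / 2) ≤ ENNReal.ofReal η * (νX.prod νY) A ^ 2 := by
    rw [hμA, ← ENNReal.ofReal_pow hα0, ← ENNReal.ofReal_mul hη0.le, ← ENNReal.ofReal_ofNat 2,
      ← ENNReal.ofReal_mul zero_le_two]
    exact (congrArg ENNReal.ofReal (by ring)).le
  obtain ⟨y, hy⟩ := exists_measure_inter_neighbourhood_prod_add_le νX νY hA ENNReal.ofReal_ne_top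
    hηc (measurableSet_le (measurable_measure_commonNeighbourhood νY hA).ennreal_toReal
      measurable_const)
    fun q hq => (ENNReal.le_ofReal_iff_toReal_le (measure_ne_top _ _) (by positivity)).2 hq
  have hfin : ENNReal.ofReal η * νX {x | (x, y) ∈ A} ^ 2 ≠ ∞ := by finiteness
  refine ⟨{x | (x, y) ∈ A}, measurable_prodMk_right hA, ?_, ?_⟩
  · have h := ENNReal.toReal_mono hfin (le_add_self.trans hy)
    rw [ENNReal.toReal_ofReal (by positivity), ENNReal.toReal_mul, ENNReal.toReal_ofReal hη0.le,
      ENNReal.toReal_pow] at h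
    have hsq : α ^ 2 / 2 ≤ (νX {x | (x, y) ∈ A}).toReal ^ 2 := by nlinarith
    nlinarith [ENNReal.toReal_nonneg (a := νX {x | (x, y) ∈ A})]
  · have h := ENNReal.toReal_mono hfin (le_self_add.trans hy)
    rwa [ENNReal.toReal_mul, ENNReal.toReal_ofReal hη0.le, ENNReal.toReal_pow] at h

theorem stmt10 {X Y : Type*} [MeasurableSpace X] [MeasurableSpace Y]
    (νX : Measure X) (νY : Measure Y)
    [IsProbabilityMeasure νX] [IsProbabilityMeasure νY]
    (A : Set (X × Y)) (hA : MeasurableSet A)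
    (α : ℝ) (hα : ((νX.prod νY) A).toReal = α)
    (η : ℝ) (hη0 : 0 < η) (hη1 : η ≤ 1) :
    ∃ X' : Set X, MeasurableSet X' ∧ α / 2 ≤ (νX X').toReal ∧
      ((νX.prod νX)
          ({q : X × X | (νY {y | (q.1, y) ∈ A ∧ (q.2, y) ∈ A}).toReal ≤ η * α ^ 2 / 2} ∩
            X' ×ˢ X')).toReal ≤ η * (νX X').toReal ^ 2 :=
  stmt10_general νX νY A hA α hα η hη0
end

section
/- Let p be a prime, F = ZMod p, S ⊆ F, K ≥ 1, and let f₁, f₃, f₄ : F → ℝ be functions with values in [−K, K] and with ‖fᵢ‖₄ ≤ 3 for i ∈ {1,3,4} (L⁴ norm with respect to the uniform probability measure on F). Then |T(f₁, 1_S, f₃, f₄)| ≤ K³/p + 9·(|S|/p)·‖f₁‖₂, where T(f₁,f₂,f₃,f₄) = E_{x,y∈F} f₁(x)f₂(y)f₃(x+y)f₄(xy). -/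
open Finset

theorem stmt11 (p : ℕ) [Fact p.Prime] (S : Finset (ZMod p)) (K : ℝ) (hK : 1 ≤ K)
    (f₁ f₃ f₄ : ZMod p → ℝ)
    (hb₁ : ∀ x, |f₁ x| ≤ K) (hb₃ : ∀ x, |f₃ x| ≤ K) (hb₄ : ∀ x, |f₄ x| ≤ K)
    (h₁₄ : ((1 / (p : ℝ)) * ∑ x : ZMod p, |f₁ x| ^ 4) ^ ((1 : ℝ) / 4) ≤ 3)
    (h₃₄ : ((1 / (p : ℝ)) * ∑ x : ZMod p, |f₃ x| ^ 4) ^ ((1 : ℝ) / 4) ≤ 3)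
    (h₄₄ : ((1 / (p : ℝ)) * ∑ x : ZMod p, |f₄ x| ^ 4) ^ ((1 : ℝ) / 4) ≤ 3) :
    |(1 / (p : ℝ) ^ 2) * ∑ x : ZMod p, ∑ y : ZMod p,
        f₁ x * (if y ∈ S then (1 : ℝ) else 0) * f₃ (x + y) * f₄ (x * y)| ≤
      K ^ 3 / p + 9 * ((S.card : ℝ) / p) *
        Real.sqrt ((1 / (p : ℝ)) * ∑ x : ZMod p, |f₁ x| ^ 2) := by
  have hp : (0 : ℝ) < p := by
    exact_mod_cast (Fact.out : p.Prime).pos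
  set P : ℝ := (p : ℝ) with hP
  set N2 : ℝ := Real.sqrt ((1 / P) * ∑ x : ZMod p, |f₁ x| ^ 2) with hN2
  have hN2nn : 0 ≤ N2 := Real.sqrt_nonneg _
  have hK0 : (0 : ℝ) < K := lt_of_lt_of_le one_pos hK
  have hcard : (#(Finset.univ : Finset (ZMod p)) : ℝ) = P := by
    rw [Finset.card_univ, ZMod.card]
  -- convert the L⁴ hypotheses
  have conv4 : ∀ f : ZMod p → ℝ,
      ((1 / P) * ∑ x : ZMod p, |f x| ^ 4) ^ ((1 : ℝ) / 4) ≤ 3 →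
      ∑ x : ZMod p, f x ^ 4 ≤ 81 * P := by
    intro f hf
    have ha : (0 : ℝ) ≤ (1 / P) * ∑ x : ZMod p, |f x| ^ 4 := by
      apply mul_nonneg (by positivity)
      exact Finset.sum_nonneg fun x _ => by positivity
    have h2 := Real.rpow_le_rpow (Real.rpow_nonneg ha _) hf (by norm_num : (0:ℝ) ≤ 4)
    rw [← Real.rpow_mul ha] at h2
    norm_num [Real.rpow_one] at h2
    have heq : ∑ x : ZMod p, f x ^ 4 = ∑ x : ZMod p, |f x| ^ 4 := by
      apply Finset.sum_congr rfl; intro x _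
      rw [← abs_pow, abs_of_nonneg (by positivity)]
    rw [heq]
    rw [inv_mul_le_iff₀ hp] at h2
    linarith
  have h3' : ∑ x : ZMod p, f₃ x ^ 4 ≤ 81 * P := conv4 f₃ h₃₄
  have h4' : ∑ x : ZMod p, f₄ x ^ 4 ≤ 81 * P := conv4 f₄ h₄₄
  have h3nn : 0 ≤ ∑ x : ZMod p, f₃ x ^ 4 :=
    Finset.sum_nonneg fun x _ => by positivity
  have h4nn : 0 ≤ ∑ x : ZMod p, f₄ x ^ 4 :=
    Finset.sum_nonneg fun x _ => by positivity
  have hsum1 : ∑ x : ZMod p, f₁ x ^ 2 = P * N2 ^ 2 := by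
    rw [hN2, Real.sq_sqrt (by
      apply mul_nonneg (by positivity)
      exact Finset.sum_nonneg fun x _ => by positivity)]
    have h : ∑ x : ZMod p, f₁ x ^ 2 = ∑ x : ZMod p, |f₁ x| ^ 2 := by
      apply Finset.sum_congr rfl; intro x _; rw [sq_abs]
    rw [h]; field_simp
  -- key bound for y ≠ 0
  have key : ∀ y : ZMod p, y ≠ 0 →
      |∑ x : ZMod p, f₁ x * f₃ (x + y) * f₄ (x * y)| ≤ 9 * P * N2 := by
    intro y hy
    have e3 : ∑ x : ZMod p, f₃ (x + y) ^ 4 = ∑ x : ZMod p, f₃ x ^ 4 :=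
      Fintype.sum_equiv (Equiv.addRight y) _ _ (fun x => rfl)
    have e4 : ∑ x : ZMod p, f₄ (x * y) ^ 4 = ∑ x : ZMod p, f₄ x ^ 4 :=
      Fintype.sum_equiv (Equiv.mulRight₀ y hy) _ _ (fun x => rfl)
    have cs2 : (∑ x : ZMod p, (f₃ (x + y) * f₄ (x * y)) ^ 2) ^ 2 ≤ (81 * P) ^ 2 := by
      calc (∑ x : ZMod p, (f₃ (x + y) * f₄ (x * y)) ^ 2) ^ 2
          = (∑ x : ZMod p, f₃ (x + y) ^ 2 * f₄ (x * y) ^ 2) ^ 2 := by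
            congr 1; exact Finset.sum_congr rfl fun x _ => by ring
        _ ≤ (∑ x : ZMod p, (f₃ (x + y) ^ 2) ^ 2) * ∑ x : ZMod p, (f₄ (x * y) ^ 2) ^ 2 :=
            Finset.sum_mul_sq_le_sq_mul_sq _ _ _
        _ = (∑ x : ZMod p, f₃ (x + y) ^ 4) * ∑ x : ZMod p, f₄ (x * y) ^ 4 := by
            congr 1 <;> exact Finset.sum_congr rfl fun x _ => by ring
        _ = (∑ x : ZMod p, f₃ x ^ 4) * ∑ x : ZMod p, f₄ x ^ 4 := by rw [e3, e4]
        _ ≤ (81 * P) * (81 * P) :=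
            mul_le_mul h3' h4' h4nn (by positivity)
        _ = (81 * P) ^ 2 := by ring
    have csqnn : 0 ≤ ∑ x : ZMod p, (f₃ (x + y) * f₄ (x * y)) ^ 2 :=
      Finset.sum_nonneg fun x _ => by positivity
    have cs2' : ∑ x : ZMod p, (f₃ (x + y) * f₄ (x * y)) ^ 2 ≤ 81 * P := by
      nlinarith [cs2, csqnn, hp]
    have cs1 : (∑ x : ZMod p, f₁ x * f₃ (x + y) * f₄ (x * y)) ^ 2 ≤
        (P * N2 ^ 2) * (81 * P) := by
      calc (∑ x : ZMod p, f₁ x * f₃ (x + y) * f₄ (x * y)) ^ 2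
          = (∑ x : ZMod p, f₁ x * (f₃ (x + y) * f₄ (x * y))) ^ 2 := by
            congr 1; exact Finset.sum_congr rfl fun x _ => by ring
        _ ≤ (∑ x : ZMod p, f₁ x ^ 2) * ∑ x : ZMod p, (f₃ (x + y) * f₄ (x * y)) ^ 2 :=
            Finset.sum_mul_sq_le_sq_mul_sq _ _ _
        _ ≤ (P * N2 ^ 2) * (81 * P) := by
            rw [hsum1]
            exact mul_le_mul_of_nonneg_left cs2' (by positivity)
    have h9 : (0 : ℝ) ≤ 9 * P * N2 := by positivity
    have : (∑ x : ZMod p, f₁ x * f₃ (x + y) * f₄ (x * y)) ^ 2 ≤ (9 * P * N2) ^ 2 := by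
      nlinarith [cs1]
    calc |∑ x : ZMod p, f₁ x * f₃ (x + y) * f₄ (x * y)|
        = Real.sqrt ((∑ x : ZMod p, f₁ x * f₃ (x + y) * f₄ (x * y)) ^ 2) :=
          (Real.sqrt_sq_eq_abs _).symm
      _ ≤ Real.sqrt ((9 * P * N2) ^ 2) := Real.sqrt_le_sqrt this
      _ = |9 * P * N2| := Real.sqrt_sq_eq_abs _
      _ = 9 * P * N2 := abs_of_nonneg h9
  -- rewrite the double sum
  have swap : ∑ x : ZMod p, ∑ y : ZMod p,
      f₁ x * (if y ∈ S then (1 : ℝ) else 0) * f₃ (x + y) * f₄ (x * y)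
      = ∑ y : ZMod p, (if y ∈ S then (1 : ℝ) else 0) *
          ∑ x : ZMod p, f₁ x * f₃ (x + y) * f₄ (x * y) := by
    rw [Finset.sum_comm]
    apply Finset.sum_congr rfl; intro y _
    rw [Finset.mul_sum]
    apply Finset.sum_congr rfl; intro x _; ring
  -- split off y = 0
  have split : ∑ y : ZMod p, (if y ∈ S then (1 : ℝ) else 0) *
      ∑ x : ZMod p, f₁ x * f₃ (x + y) * f₄ (x * y)
      = ((if (0 : ZMod p) ∈ S then (1 : ℝ) else 0) *
          ∑ x : ZMod p, f₁ x * f₃ (x + 0) * f₄ (x * 0)) +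
        ∑ y ∈ Finset.univ.erase (0 : ZMod p), (if y ∈ S then (1 : ℝ) else 0) *
          ∑ x : ZMod p, f₁ x * f₃ (x + y) * f₄ (x * y) :=
    (Finset.add_sum_erase _ _ (Finset.mem_univ 0)).symm
  have term0 : |(if (0 : ZMod p) ∈ S then (1 : ℝ) else 0) *
      ∑ x : ZMod p, f₁ x * f₃ (x + 0) * f₄ (x * 0)| ≤ P * K ^ 3 := by
    rw [abs_mul]
    have h1 : |if (0 : ZMod p) ∈ S then (1 : ℝ) else 0| ≤ 1 := by
      split <;> simp
    have h2 : |∑ x : ZMod p, f₁ x * f₃ (x + 0) * f₄ (x * 0)| ≤ P * K ^ 3 := by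
      calc |∑ x : ZMod p, f₁ x * f₃ (x + 0) * f₄ (x * 0)|
          ≤ ∑ x : ZMod p, |f₁ x * f₃ (x + 0) * f₄ (x * 0)| := Finset.abs_sum_le_sum_abs _ _
        _ ≤ ∑ _x : ZMod p, K ^ 3 := by
            apply Finset.sum_le_sum; intro x _
            rw [abs_mul, abs_mul]
            calc |f₁ x| * |f₃ (x + 0)| * |f₄ (x * 0)| ≤ K * K * K := by
                  apply mul_le_mul (mul_le_mul (hb₁ x) (hb₃ _) (abs_nonneg _) hK0.le)
                    (hb₄ _) (abs_nonneg _) (by positivity)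
              _ = K ^ 3 := by ring
        _ = P * K ^ 3 := by rw [Finset.sum_const, nsmul_eq_mul, hcard]
    calc |if (0 : ZMod p) ∈ S then (1 : ℝ) else 0| *
        |∑ x : ZMod p, f₁ x * f₃ (x + 0) * f₄ (x * 0)|
        ≤ 1 * (P * K ^ 3) := mul_le_mul h1 h2 (abs_nonneg _) one_pos.le
      _ = P * K ^ 3 := one_mul _
  have rest : |∑ y ∈ Finset.univ.erase (0 : ZMod p), (if y ∈ S then (1 : ℝ) else 0) *
      ∑ x : ZMod p, f₁ x * f₃ (x + y) * f₄ (x * y)| ≤ (S.card : ℝ) * (9 * P * N2) := by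
    calc |∑ y ∈ Finset.univ.erase (0 : ZMod p), (if y ∈ S then (1 : ℝ) else 0) *
          ∑ x : ZMod p, f₁ x * f₃ (x + y) * f₄ (x * y)|
        ≤ ∑ y ∈ Finset.univ.erase (0 : ZMod p), |(if y ∈ S then (1 : ℝ) else 0) *
          ∑ x : ZMod p, f₁ x * f₃ (x + y) * f₄ (x * y)| := Finset.abs_sum_le_sum_abs _ _
      _ ≤ ∑ y ∈ Finset.univ.erase (0 : ZMod p),
          (if y ∈ S then (1 : ℝ) else 0) * (9 * P * N2) := by
          apply Finset.sum_le_sum; intro y hy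
          have hy0 : y ≠ 0 := Finset.ne_of_mem_erase hy
          rw [abs_mul]
          split
          · simpa using key y hy0
          · simp
      _ ≤ ∑ y : ZMod p, (if y ∈ S then (1 : ℝ) else 0) * (9 * P * N2) := by
          apply Finset.sum_le_sum_of_subset_of_nonneg (Finset.subset_univ _)
          intro y _ _
          split
          · positivity
          · simp
      _ = (S.card : ℝ) * (9 * P * N2) := by
          simp only [ite_mul, one_mul, zero_mul]
          rw [Finset.sum_ite_mem, Finset.univ_inter, Finset.sum_const, nsmul_eq_mul]
  -- combine
  rw [swap, split, abs_mul]
  have habs : |(1 : ℝ) / P ^ 2| = 1 / P ^ 2 := abs_of_nonneg (by positivity)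
  rw [habs]
  have htot : |((if (0 : ZMod p) ∈ S then (1 : ℝ) else 0) *
        ∑ x : ZMod p, f₁ x * f₃ (x + 0) * f₄ (x * 0)) +
      ∑ y ∈ Finset.univ.erase (0 : ZMod p), (if y ∈ S then (1 : ℝ) else 0) *
        ∑ x : ZMod p, f₁ x * f₃ (x + y) * f₄ (x * y)|
      ≤ P * K ^ 3 + (S.card : ℝ) * (9 * P * N2) :=
    (abs_add_le _ _).trans (add_le_add term0 rest)
  calc (1 / P ^ 2) * |((if (0 : ZMod p) ∈ S then (1 : ℝ) else 0) *
        ∑ x : ZMod p, f₁ x * f₃ (x + 0) * f₄ (x * 0)) +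
      ∑ y ∈ Finset.univ.erase (0 : ZMod p), (if y ∈ S then (1 : ℝ) else 0) *
        ∑ x : ZMod p, f₁ x * f₃ (x + y) * f₄ (x * y)|
      ≤ (1 / P ^ 2) * (P * K ^ 3 + (S.card : ℝ) * (9 * P * N2)) :=
        mul_le_mul_of_nonneg_left htot (by positivity)
    _ = K ^ 3 / P + 9 * ((S.card : ℝ) / P) * N2 := by field_simp
end
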